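/- Let G=(V,E) be a weighted undirected graph, S ⊆ V, and for each u let B_S(u) = {v ∈ V : d_G(u,v) < d_G(u,S)}. Let G_S be the subgraph retaining each edge incident to v of weight at most h_S(v) (for some endpoint v). Then for any two vertices u,v with v ∈ B_S(u), d_{G_S}(u,v) = d_G(u,v). -/
import Mathlib

/-- The weight of a walk: sum of the weights of its edges. -/
noncomputable def walkWeight {V : Type*} (G : SimpleGraph V) (w : V → V → ℝ)
    {u v : V} (p : G.Walk u v) : ℝ :=
  (p.darts.map (fun e => w e.fst e.snd)).sum

/-- Weighted shortest-path distance: infimum of weights of walks from `u` to `v`. -/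
noncomputable def wdist {V : Type*} (G : SimpleGraph V) (w : V → V → ℝ)
    (u v : V) : ℝ :=
  sInf {x | ∃ p : G.Walk u v, walkWeight G w p = x}

/-- `h_S(u) = d(u,S)`, the distance from `u` to the set `S`. -/
noncomputable def hSdist {V : Type*} (G : SimpleGraph V) (w : V → V → ℝ)
    (S : Set V) (u : V) : ℝ :=
  sInf {x | ∃ s ∈ S, wdist G w u s = x}

section Aux

variable {V : Type*} {G : SimpleGraph V} {w : V → V → ℝ}

lemma walkWeight_nil {u : V} : walkWeight G w (SimpleGraph.Walk.nil : G.Walk u u) = 0 := rfl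

lemma walkWeight_cons {x y v : V} (h : G.Adj x y) (p : G.Walk y v) :
    walkWeight G w (SimpleGraph.Walk.cons h p) = w x y + walkWeight G w p := by
  simp [walkWeight]

lemma walkWeight_append {x y z : V} (p : G.Walk x y) (q : G.Walk y z) :
    walkWeight G w (p.append q) = walkWeight G w p + walkWeight G w q := by
  simp [walkWeight, SimpleGraph.Walk.darts_append]

lemma walkWeight_nonneg (hw : ∀ x y, 0 ≤ w x y) {x y : V} (p : G.Walk x y) :
    0 ≤ walkWeight G w p := by
  induction p with
  | nil => simp [walkWeight_nil]
  | cons h p ih => rw [walkWeight_cons]; exact add_nonneg (hw _ _) ih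

lemma wdist_nonneg (hw : ∀ x y, 0 ≤ w x y) (x y : V) : 0 ≤ wdist G w x y := by
  apply Real.sInf_nonneg
  rintro t ⟨p, rfl⟩
  exact walkWeight_nonneg hw p

lemma exists_walk_le {H G' : SimpleGraph V} (hle : ∀ a b, H.Adj a b → G'.Adj a b)
    {x y : V} (p : H.Walk x y) :
    ∃ q : G'.Walk x y, walkWeight G' w q = walkWeight H w p := by
  induction p with
  | nil => exact ⟨.nil, rfl⟩
  | cons h p ih =>
      obtain ⟨q, hq⟩ := ih
      exact ⟨.cons (hle _ _ h) q, by rw [walkWeight_cons, walkWeight_cons, hq]⟩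

lemma walk_to_GS (hw_nonneg : ∀ x y, 0 ≤ w x y)
    (S : Set V) (hS_ne : S.Nonempty) (GS : SimpleGraph V)
    (hGS : ∀ x y, GS.Adj x y ↔
      G.Adj x y ∧ (w x y ≤ hSdist G w S x ∨ w x y ≤ hSdist G w S y))
    (u v : V) :
    ∀ {x : V} (p₂ : G.Walk x v) (p₁ : G.Walk u x),
      walkWeight G w (p₁.append p₂) < hSdist G w S u →
      ∃ q : GS.Walk x v, walkWeight GS w q = walkWeight G w p₂ := by
  intro x p₂
  induction p₂ with
  | nil => exact fun _ _ => ⟨.nil, rfl⟩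
  | @cons x y v hadj p ih =>
      intro p₁ hlt
      have hW : walkWeight G w (p₁.append (SimpleGraph.Walk.cons hadj p))
          = walkWeight G w p₁ + w x y + walkWeight G w p := by
        rw [walkWeight_append, walkWeight_cons]; ring
      have hp_nonneg := walkWeight_nonneg (G := G) hw_nonneg p
      have hp₁_nonneg := walkWeight_nonneg (G := G) hw_nonneg p₁
      have hu_pos : 0 < hSdist G w S u := by
        have := walkWeight_nonneg (G := G) hw_nonneg (p₁.append (SimpleGraph.Walk.cons hadj p))
        linarith
      -- key: w x y ≤ hSdist G w S x
      have hkey : w x y ≤ hSdist G w S x := by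
        obtain ⟨s₀, hs₀⟩ := hS_ne
        have hne0 : {t | ∃ s ∈ S, wdist G w x s = t}.Nonempty := ⟨_, s₀, hs₀, rfl⟩
        apply le_csInf hne0
        rintro t ⟨s, hs, rfl⟩
        -- hSdist u ≤ wdist u s
        have hbdd : BddBelow {t | ∃ s ∈ S, wdist G w u s = t} :=
          ⟨0, by rintro t ⟨s', _, rfl⟩; exact wdist_nonneg hw_nonneg _ _⟩
        have hus : hSdist G w S u ≤ wdist G w u s := csInf_le hbdd ⟨s, hs, rfl⟩
        have hus_pos : 0 < wdist G w u s := lt_of_lt_of_le hu_pos hus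
        -- the walk set u → s is nonempty
        have hne : {t | ∃ p : G.Walk u s, walkWeight G w p = t}.Nonempty := by
          by_contra h
          rw [Set.not_nonempty_iff_eq_empty] at h
          rw [wdist, h, Real.sInf_empty] at hus_pos
          exact lt_irrefl _ hus_pos
        obtain ⟨_, r, rfl⟩ := hne
        -- wdist x s via le_csInf
        have hne1 : {t | ∃ q : G.Walk x s, walkWeight G w q = t}.Nonempty :=
          ⟨_, p₁.reverse.append r, rfl⟩
        apply le_csInf hne1
        rintro t ⟨q, rfl⟩
        have h1 : wdist G w u s ≤ walkWeight G w (p₁.append q) :=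
          csInf_le ⟨0, by rintro t ⟨p', rfl⟩; exact walkWeight_nonneg hw_nonneg p'⟩
            ⟨p₁.append q, rfl⟩
        rw [walkWeight_append] at h1
        rw [hW] at hlt
        linarith
      have hGSadj : GS.Adj x y := (hGS x y).2 ⟨hadj, Or.inl hkey⟩
      -- apply IH with extended prefix
      have hlt' : walkWeight G w ((p₁.append (SimpleGraph.Walk.cons hadj .nil)).append p)
          < hSdist G w S u := by
        rw [walkWeight_append, walkWeight_append, walkWeight_cons, walkWeight_nil, hW] at *
        linarith
      obtain ⟨q, hq⟩ := ih (p₁.append (SimpleGraph.Walk.cons hadj .nil)) hlt'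
      exact ⟨.cons hGSadj q, by rw [walkWeight_cons, walkWeight_cons, hq]⟩

end Aux

/-- If `v ∈ B_S(u)`, i.e. `d_G(u,v) < d_G(u,S)`, then the distance from `u` to `v`
in the truncated graph `G_S` (keeping each edge `(x,y)` iff `w x y ≤ h_S x` or
`w x y ≤ h_S y`) equals the distance in `G`. -/
theorem stmt2 {V : Type*} [Fintype V] (G : SimpleGraph V) (w : V → V → ℝ)
    (hw_symm : ∀ x y, w x y = w y x) (hw_nonneg : ∀ x y, 0 ≤ w x y)
    (S : Set V) (hS_ne : S.Nonempty)
    (GS : SimpleGraph V)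
    (hGS : ∀ x y, GS.Adj x y ↔
      G.Adj x y ∧ (w x y ≤ hSdist G w S x ∨ w x y ≤ hSdist G w S y))
    (u v : V) (hv : wdist G w u v < hSdist G w S u) :
    wdist GS w u v = wdist G w u v := by
  set A := {x | ∃ p : G.Walk u v, walkWeight G w p = x} with hA
  set B := {x | ∃ p : GS.Walk u v, walkWeight GS w p = x} with hB
  have hBsubA : B ⊆ A := by
    rintro t ⟨q, rfl⟩
    obtain ⟨q', hq'⟩ := exists_walk_le (G' := G) (w := w)
      (fun a b h => ((hGS a b).1 h).1) q
    exact ⟨q', hq'⟩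
  have hAbdd : BddBelow A := ⟨0, by rintro t ⟨p, rfl⟩; exact walkWeight_nonneg hw_nonneg p⟩
  have hBbdd : BddBelow B := hAbdd.mono hBsubA
  by_cases hAne : A.Nonempty
  · -- there is an element of A below hSdist u, which lies in B
    have hAtoB : ∀ a ∈ A, a < hSdist G w S u → a ∈ B := by
      rintro a ⟨p, rfl⟩ ha
      obtain ⟨q, hq⟩ := walk_to_GS hw_nonneg S hS_ne GS hGS u v p .nil
        (by rwa [SimpleGraph.Walk.nil_append])
      exact ⟨q, hq⟩
    have hlt : sInf A < hSdist G w S u := hv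
    obtain ⟨a, haA, halt⟩ := (csInf_lt_iff hAbdd hAne).1 hlt
    have haB : a ∈ B := hAtoB a haA halt
    have hBne : B.Nonempty := ⟨a, haB⟩
    apply le_antisymm
    · by_contra h
      push_neg at h
      have h2 : sInf A < min (sInf B) (hSdist G w S u) := lt_min h hv
      obtain ⟨a', ha'A, ha'lt⟩ := (csInf_lt_iff hAbdd hAne).1 h2
      have ha'B : a' ∈ B := hAtoB a' ha'A (lt_of_lt_of_le ha'lt (min_le_right _ _))
      exact absurd (csInf_le hBbdd ha'B) (not_le.2 (lt_of_lt_of_le ha'lt (min_le_left _ _)))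
    · exact le_csInf hBne fun b hb => csInf_le hAbdd (hBsubA hb)
  · have hBne : ¬ B.Nonempty := fun ⟨b, hb⟩ => hAne ⟨b, hBsubA hb⟩
    rw [Set.not_nonempty_iff_eq_empty] at hAne hBne
    rw [show wdist GS w u v = sInf B from rfl, show wdist G w u v = sInf A from rfl,
      hAne, hBne]
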